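/- arXiv:1010.0640 — 5 statements merged into one kernel-verified Lean document; each statement's English description precedes it below -/
import Mathlib

section
/- Given complex numbers a_i^{(r)} for 1 ≤ i ≤ n and 1 ≤ r ≤ p_i − p_{i−1} (where 0 = p_0 ≤ p_1 ≤ ⋯ ≤ p_n are integers), there exist complex numbers a_{i,j} for 1 ≤ i ≤ n and 1 ≤ j ≤ p_i such that a_{i, p_i − p_{i−1} + r} = a_{i−1, r} for all 1 ≤ r ≤ p_{i−1}, and the r-th elementary symmetric polynomial e_r(a_{i,1}, …, a_{i,p_i}) equals a_i^{(r)} for all 1 ≤ r ≤ p_i − p_{i−1}. -/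
/-- The `r`-th elementary symmetric polynomial of the values `f 1, …, f m`. -/
noncomputable def esym (r m : ℕ) (f : ℕ → ℂ) : ℂ :=
  ∑ s ∈ Finset.powersetCard r (Finset.Icc 1 m), ∏ j ∈ s, f j

/-!
Let `P = ∏ (X + g j)` over the `m` prescribed old entries. Appending `k` new entries `c j`
multiplies `P` by the monic polynomial `Q = ∏ (X + c j)` of degree `k`, and by Vieta the values
`e_1, …, e_k` of all `k + m` entries are the `k` coefficients of `Q * P` just below its leading
one. These coefficients depend triangularly on the coefficients of `Q`, so a monic `Q` realising
any prescribed values exists, and over `ℂ` it splits, which yields the new entries. Row by row,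
this builds the whole array.
-/

open Polynomial Finset

theorem Finset.prod_Icc_one_add {M : Type*} [CommMonoid M] (f : ℕ → M) (k m : ℕ) :
    ∏ j ∈ Icc 1 (k + m), f j = (∏ j ∈ Icc 1 k, f j) * ∏ j ∈ Icc 1 m, f (k + j) := by
  induction m with
  | zero => simp
  | succ m ih =>
    rw [← add_assoc, prod_Icc_succ_top (by omega), prod_Icc_succ_top (by omega), ih, mul_assoc,
      add_assoc]

namespace Polynomial

/-- Multiplying by `X` shifts the coefficients to be prescribed up by one; afterwards the
constant term of `Q` adjusts the coefficient in degree `P.natDegree` freely, as `P` is monic. -/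
theorem exists_monic_coeff_mul_eq {R : Type*} [CommRing R] [Nontrivial R] {P : R[X]}
    (hP : P.Monic) (k : ℕ) (t : ℕ → R) :
    ∃ Q : R[X], Q.Monic ∧ Q.natDegree = k ∧
      ∀ j < k, (Q * P).coeff (P.natDegree + j) = t j := by
  induction k generalizing t with
  | zero => exact ⟨1, monic_one, natDegree_one, by omega⟩
  | succ k ih =>
    obtain ⟨Q, hQ, hQdeg, hQcoeff⟩ := ih (fun j => t (j + 1))
    set v := (X * Q * P).coeff P.natDegree
    have hXQ : (X * Q).Monic := monic_X.mul hQ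
    have hXQdeg : (X * Q).natDegree = k + 1 := by
      rw [monic_X.natDegree_mul hQ, natDegree_X, hQdeg, add_comm]
    have hC : (C (t 0 - v)).degree < (X * Q).degree := by
      rw [degree_eq_natDegree hXQ.ne_zero, hXQdeg]
      exact degree_C_le.trans_lt (by exact_mod_cast k.succ_pos)
    refine ⟨X * Q + C (t 0 - v), hXQ.add_of_left hC, by rw [natDegree_add_C, hXQdeg], ?_⟩
    intro j hj
    rw [add_mul, coeff_add, coeff_C_mul]
    rcases j with _ | j
    · rw [add_zero, hP.coeff_natDegree]
      ring
    · rw [coeff_eq_zero_of_natDegree_lt (p := P) (by omega), mul_zero, add_zero, mul_assoc,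
        ← add_assoc, coeff_X_mul, hQcoeff j (by omega)]

theorem exists_prod_Icc_X_add_C_eq {K : Type*} [Field K] [IsAlgClosed K] :
    ∀ (k : ℕ) (Q : K[X]), Q.Monic → Q.natDegree = k →
      ∃ c : ℕ → K, ∏ j ∈ Icc 1 k, (X + C (c j)) = Q
  | 0, Q, hQ, hdeg => ⟨0, by simp [hQ.natDegree_eq_zero.mp hdeg]⟩
  | k + 1, Q, hQ, hdeg => by
    obtain ⟨z, hz⟩ := IsAlgClosed.exists_root Q <| by
      rw [degree_eq_natDegree hQ.ne_zero, hdeg]; exact_mod_cast k.succ_ne_zero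
    have hfactor : (X - C z) * (Q /ₘ (X - C z)) = Q := mul_divByMonic_eq_iff_isRoot.mpr hz
    have hQ' : (Q /ₘ (X - C z)).Monic :=
      (monic_X_sub_C z).of_mul_monic_left (by rw [hfactor]; exact hQ)
    have hdeg' : (Q /ₘ (X - C z)).natDegree = k := by
      have := congrArg natDegree hfactor
      rw [(monic_X_sub_C z).natDegree_mul hQ', natDegree_X_sub_C, hdeg] at this
      omega
    obtain ⟨c, hc⟩ := exists_prod_Icc_X_add_C_eq k _ hQ' hdeg'
    refine ⟨Function.update c (k + 1) (-z), ?_⟩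
    rw [prod_Icc_succ_top (by omega), Function.update_self, C_neg, ← sub_eq_add_neg,
      ← hfactor, ← hc, mul_comm]
    congr 1
    refine prod_congr rfl fun j hj => ?_
    rw [Function.update_of_ne (by simp at hj; omega)]

end Polynomial

theorem esym_eq_coeff_prod (m r : ℕ) (hr : r ≤ m) (f : ℕ → ℂ) :
    esym r m f = (∏ j ∈ Icc 1 m, (X + C (f j))).coeff (m - r) := by
  have hcard : (Icc 1 m).card = m := by simp
  rw [prod_X_add_C_coeff _ f (by omega), hcard, Nat.sub_sub_self hr, esym]

theorem exists_esym_eq_of_suffix (k m : ℕ) (g t : ℕ → ℂ) :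
    ∃ c : ℕ → ℂ, (∀ r, 1 ≤ r → r ≤ m → c (k + r) = g r) ∧
      ∀ r, 1 ≤ r → r ≤ k → esym r (k + m) c = t r := by
  set P : ℂ[X] := ∏ j ∈ Icc 1 m, (X + C (g j))
  have hP : P.Monic := monic_prod_of_monic _ _ fun j _ => monic_X_add_C _
  have hPdeg : P.natDegree = m := by
    rw [natDegree_prod_of_monic _ _ fun j _ => monic_X_add_C _]
    simp
  obtain ⟨Q, hQ, hQdeg, hQcoeff⟩ := exists_monic_coeff_mul_eq hP k (fun j => t (k - j))
  obtain ⟨c, hc⟩ := exists_prod_Icc_X_add_C_eq k Q hQ hQdeg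
  refine ⟨fun j => if j ≤ k then c j else g (j - k),
    fun r hr _ => by simp [show ¬k + r ≤ k by omega], ?_⟩
  intro r hr hrk
  have hprod : ∏ j ∈ Icc 1 (k + m), (X + C (if j ≤ k then c j else g (j - k))) = Q * P := by
    rw [prod_Icc_one_add, ← hc]
    congr 1 <;> refine prod_congr rfl fun j hj => ?_ <;> simp at hj
    · simp [hj.2]
    · simp [show ¬k + j ≤ k by omega]
  rw [esym_eq_coeff_prod _ _ (by omega), hprod, show k + m - r = P.natDegree + (k - r) by omega,
    hQcoeff _ (by omega), Nat.sub_sub_self hrk]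

theorem stmt0_general (n : ℕ) (p : ℕ → ℕ) (hmono : Monotone p)
    (a : ℕ → ℕ → ℂ) :
    ∃ b : ℕ → ℕ → ℂ,
      (∀ i r, 1 ≤ i → i ≤ n → 1 ≤ r → r ≤ p (i - 1) →
        b i (p i - p (i - 1) + r) = b (i - 1) r) ∧
      (∀ i r, 1 ≤ i → i ≤ n → 1 ≤ r → r ≤ p i - p (i - 1) →
        esym r (p i) (b i) = a i r) := by
  induction n with
  | zero => exact ⟨0, by omega, by omega⟩
  | succ n ih =>
    obtain ⟨b, hb_suffix, hb_esym⟩ := ih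
    obtain ⟨c, hc_suffix, hc_esym⟩ :=
      exists_esym_eq_of_suffix (p (n + 1) - p n) (p n) (b n) (a (n + 1))
    have hlen : p (n + 1) - p n + p n = p (n + 1) := Nat.sub_add_cancel (hmono n.le_succ)
    refine ⟨Function.update b (n + 1) c, ?_, ?_⟩ <;> intro i r hi hi_le
    · rcases (by omega : i ≤ n ∨ i = n + 1) with hin | rfl
      · simpa [Function.update_of_ne (show i ≠ n + 1 by omega),
          Function.update_of_ne (show i - 1 ≠ n + 1 by omega)] using hb_suffix i r hi hin
      · simpa using hc_suffix r
    · rcases (by omega : i ≤ n ∨ i = n + 1) with hin | rfl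
      · simpa [Function.update_of_ne (show i ≠ n + 1 by omega)] using hb_esym i r hi hin
      · intro hr hrk
        rw [add_tsub_cancel_right] at hrk
        rw [Function.update_self, ← hlen]
        exact hc_esym r hr hrk

/-- Given complex numbers `a i r` for `1 ≤ i ≤ n`, `1 ≤ r ≤ p i - p (i-1)` (where
`0 = p 0 ≤ p 1 ≤ ⋯ ≤ p n`), there exist complex numbers `b i j` for `1 ≤ i ≤ n`,
`1 ≤ j ≤ p i` such that `b i (p i - p (i-1) + r) = b (i-1) r` for `1 ≤ r ≤ p (i-1)`
and `e_r(b i 1, …, b i (p i)) = a i r` for `1 ≤ r ≤ p i - p (i-1)`. -/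
theorem stmt0 (n : ℕ) (p : ℕ → ℕ) (hp0 : p 0 = 0) (hmono : Monotone p)
    (a : ℕ → ℕ → ℂ) :
    ∃ b : ℕ → ℕ → ℂ,
      (∀ i r, 1 ≤ i → i ≤ n → 1 ≤ r → r ≤ p (i - 1) →
        b i (p i - p (i - 1) + r) = b (i - 1) r) ∧
      (∀ i r, 1 ≤ i → i ≤ n → 1 ≤ r → r ≤ p i - p (i - 1) →
        esym r (p i) (b i) = a i r) :=
  stmt0_general n p hmono a
end

section
/- Let λ be a partition of N, let A be a standard Young tableau of shape λ (entries 1,…,N, strictly increasing up columns and along rows), and let B be a column-strict tableau of shape λ with entries 1,…,N (each used once, strictly increasing up columns) such that A ≠ B and A > B in the order generated by the basic move: find entries i > j in A with the column of i strictly left of the column of j, interchange them and reorder columns to get a column-strict tableau. Then there exist 1 ≤ i < j ≤ N such that i and j appear in the same row of A and in the same column of B. -/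
open Relation

/-- A tableau of a given Young diagram shape `μ` with entries `1,…,N` (encoded as `Fin N`),
each used exactly once.  `pos k` records the (row, column) of entry `k`; rows are indexed
from the bottom (row `0` is the bottom, longest, row) so that "up a column" means
increasing row index. -/
structure Tab (μ : YoungDiagram) (N : ℕ) where
  pos : Fin N → ℕ × ℕ
  mem : ∀ k, pos k ∈ μ
  inj : Function.Injective pos
  surj : ∀ c ∈ μ, ∃ k, pos k = c

/-- Column-strict: entries strictly increase up each column. -/
def ColStrict {μ : YoungDiagram} {N : ℕ} (T : Tab μ N) : Prop :=
  ∀ k l : Fin N, k < l → (T.pos k).2 = (T.pos l).2 → (T.pos k).1 < (T.pos l).1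

/-- Standard: column-strict and entries increase from left to right along each row. -/
def Std {μ : YoungDiagram} {N : ℕ} (T : Tab μ N) : Prop :=
  ColStrict T ∧
    ∀ k l : Fin N, k < l → (T.pos k).1 = (T.pos l).1 → (T.pos k).2 < (T.pos l).2

/-- The basic move: find entries `i > j` in `A` with the column of `i` strictly to the
left of the column of `j`; interchange these entries and reorder within columns to
obtain another column-strict tableau `B`.  (Thus the column containing each entry `k`
of `B` is the column containing `Equiv.swap i j k` in `A`.) -/
def Move {μ : YoungDiagram} {N : ℕ} (A B : Tab μ N) : Prop :=
  ColStrict B ∧ ∃ i j : Fin N, j < i ∧ (A.pos i).2 < (A.pos j).2 ∧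
    ∀ k : Fin N, (B.pos k).2 = (A.pos (Equiv.swap i j k)).2

/-- Lexicographic comparison of column words. -/
def LexLt {N : ℕ} (f g : Fin N → ℕ) : Prop :=
  ∃ m : Fin N, (∀ k, k < m → f k = g k) ∧ f m < g m

theorem LexLt.trans' {N : ℕ} {f g h : Fin N → ℕ} (h1 : LexLt f g) (h2 : LexLt g h) :
    LexLt f h := by
  obtain ⟨m1, e1, l1⟩ := h1
  obtain ⟨m2, e2, l2⟩ := h2
  rcases lt_trichotomy m1 m2 with hlt | heq | hgt
  · exact ⟨m1, fun k hk => (e1 k hk).trans (e2 k (hk.trans hlt)),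
      lt_of_lt_of_le l1 (le_of_eq (e2 m1 hlt))⟩
  · subst heq
    exact ⟨m1, fun k hk => (e1 k hk).trans (e2 k hk), l1.trans l2⟩
  · exact ⟨m2, fun k hk => (e1 k (hk.trans hgt)).trans (e2 k hk),
      lt_of_le_of_lt (le_of_eq (e1 m2 hgt)) l2⟩

theorem move_lexLt {μ : YoungDiagram} {N : ℕ} {A B : Tab μ N} (h : Move A B) :
    LexLt (fun k => (B.pos k).2) (fun k => (A.pos k).2) := by
  obtain ⟨-, i, j, hji, hcol, hc⟩ := h
  refine ⟨j, fun k hk => ?_, ?_⟩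
  · have hki : k ≠ i := ne_of_lt (hk.trans hji)
    have hkj : k ≠ j := ne_of_lt hk
    simp only [hc k, Equiv.swap_apply_of_ne_of_ne hki hkj]
  · simpa only [hc j, Equiv.swap_apply_right] using hcol

theorem transGen_lexLt {μ : YoungDiagram} {N : ℕ} {A B : Tab μ N}
    (h : Relation.TransGen Move A B) :
    LexLt (fun k => (B.pos k).2) (fun k => (A.pos k).2) := by
  induction h with
  | single h => exact move_lexLt h
  | tail _ h2 ih => exact (move_lexLt h2).trans' ih

/-- If `A` is standard, `B` is column-strict and `A > B` in the order generated by the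
basic move, then there exist entries `i < j` appearing in the same row of `A` and in
the same column of `B`. -/
theorem stmt2 {μ : YoungDiagram} {N : ℕ} (A B : Tab μ N)
    (hA : Std A) (hB : ColStrict B) (h : Relation.TransGen Move A B) :
    ∃ i j : Fin N, i < j ∧ (A.pos i).1 = (A.pos j).1 ∧ (B.pos i).2 = (B.pos j).2 := by
  obtain ⟨m, hEq0, hLt0⟩ := transGen_lexLt h
  have hEq : ∀ k, k < m → (B.pos k).2 = (A.pos k).2 := hEq0
  have hLt : (B.pos m).2 < (A.pos m).2 := hLt0
  -- the cell in `A`'s row of `m`, in column `(B.pos m).2`, is in `μ`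
  have hcell : ((A.pos m).1, (B.pos m).2) ∈ μ := by
    have hm := A.mem m
    exact μ.up_left_mem le_rfl (le_of_lt hLt) hm
  obtain ⟨b, hb⟩ := A.surj _ hcell
  have hrow : (A.pos b).1 = (A.pos m).1 := by rw [hb]
  have hcolb : (A.pos b).2 = (B.pos m).2 := by rw [hb]
  have hbm : b < m := by
    rcases lt_trichotomy b m with h' | h' | h'
    · exact h'
    · exfalso
      subst h'
      rw [hcolb] at hLt
      exact lt_irrefl _ hLt
    · exfalso
      have := hA.2 m b h' hrow.symm
      rw [hcolb] at this
      exact absurd (hLt.trans this) (lt_irrefl _)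
  exact ⟨b, m, hbm, hrow, by rw [hEq b hbm, hcolb]⟩
end

section
/- Let m be a finite-dimensional Lie algebra over ℂ equipped with a grading m = ⊕_{d<0} m(d) by strictly negative integers (so [m(c), m(d)] ⊆ m(c+d)). Then the intersection over all i ≥ 0 of the left ideals U(m)·m^i of the universal enveloping algebra (where m^i denotes the span of products of i elements of m) is zero. -/
attribute [local instance 100] LieRing.ofAssociativeRing

/-!
Send `x ∈ m(d)` to `ι x · t^(-d)` in `U(m)[t]`. Since the degrees add under the bracket and `t` is
central, this is a Lie algebra map, so it extends to an algebra map `Φ : U(m) → U(m)[t]`, which is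
injective because setting `t = 1` undoes it. All degrees are negative, so `Φ` sends `m` into
`t · U(m)[t]` and hence `U(m)·m^i` into `t^i · U(m)[t]`; these have zero intersection.
-/

open Polynomial UniversalEnvelopingAlgebra

noncomputable section

namespace Polynomial

variable (R A : Type*) [CommSemiring R] [Semiring A] [Algebra R A]

def multiplesOfXPow (i : ℕ) : Submodule R A[X] :=
  LinearMap.range (LinearMap.mulLeft R (X ^ i : A[X]))

variable {R A}

theorem mem_multiplesOfXPow {i : ℕ} {p : A[X]} : p ∈ multiplesOfXPow R A i ↔ X ^ i ∣ p := by
  simp [multiplesOfXPow, Dvd.dvd, eq_comm]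

theorem multiplesOfXPow_mul_le (a b : ℕ) :
    multiplesOfXPow R A a * multiplesOfXPow R A b ≤ multiplesOfXPow R A (a + b) := by
  rw [Submodule.mul_le]
  rintro _ ⟨p, rfl⟩ _ ⟨q, rfl⟩
  refine ⟨p * q, ?_⟩
  simp only [LinearMap.mulLeft_apply, pow_add, mul_assoc]
  rw [← mul_assoc p, ← (commute_X_pow p b).eq, mul_assoc]

theorem pow_multiplesOfXPow_one_le (i : ℕ) :
    multiplesOfXPow R A 1 ^ i ≤ multiplesOfXPow R A i := by
  induction i with
  | zero => exact fun p _ ↦ mem_multiplesOfXPow.2 (by simp)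
  | succ i ih =>
    rw [pow_succ]
    exact (mul_le_mul_left ih _).trans (multiplesOfXPow_mul_le i 1)

theorem top_mul_multiplesOfXPow_le (i : ℕ) :
    ⊤ * multiplesOfXPow R A i ≤ multiplesOfXPow R A i := by
  rw [Submodule.mul_le]
  rintro r - _ ⟨q, rfl⟩
  exact ⟨r * q, by simp only [LinearMap.mulLeft_apply, ← mul_assoc, (commute_X_pow r i).eq]⟩

theorem map_top_mul_pow_le_multiplesOfXPow {B : Type*} [Semiring B] [Algebra R B]
    (f : B →ₐ[R] A[X]) {M : Submodule R B} (hM : M.map f.toLinearMap ≤ multiplesOfXPow R A 1)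
    (i : ℕ) : (⊤ * M ^ i).map f.toLinearMap ≤ multiplesOfXPow R A i := by
  rw [Submodule.map_mul, Submodule.map_pow]
  calc _ ≤ ⊤ * multiplesOfXPow R A 1 ^ i := mul_le_mul' le_top (pow_le_pow_left' hM i)
    _ ≤ ⊤ * multiplesOfXPow R A i := mul_le_mul_right (pow_multiplesOfXPow_one_le i) _
    _ ≤ multiplesOfXPow R A i := top_mul_multiplesOfXPow_le i

theorem iInf_multiplesOfXPow : ⨅ i, multiplesOfXPow R A i = ⊥ := by
  refine eq_bot_iff.2 fun p hp ↦ (Submodule.mem_bot R).2 (Polynomial.ext fun j ↦ ?_)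
  have hdvd := mem_multiplesOfXPow.1 (Submodule.mem_iInf _ |>.1 hp (j + 1))
  exact X_pow_dvd_iff.1 hdvd j j.lt_succ_self

def evalOneAlgHom : A[X] →ₐ[R] A :=
  eval₂AlgHom (AlgHom.id R A) 1 fun a ↦ Commute.one_right a

theorem evalOneAlgHom_monomial (n : ℕ) (a : A) : evalOneAlgHom (R := R) (monomial n a) = a := by
  simp [evalOneAlgHom, eval₂AlgHom]

end Polynomial

namespace UniversalEnvelopingAlgebra

variable {R L : Type*} [CommRing R] [LieRing L] [LieAlgebra R L] (𝓖 : ℤ → Submodule R L)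

theorem eq_zero_of_mem_of_nonneg (hneg : ∀ d : ℤ, 0 ≤ d → 𝓖 d = ⊥) {d : ℤ} (hd : 0 ≤ d)
    {x : L} (hx : x ∈ 𝓖 d) : x = 0 := by
  rwa [hneg d hd, Submodule.mem_bot] at hx

variable [DirectSum.Decomposition 𝓖]

def weightedι : L →ₗ[R] (UniversalEnvelopingAlgebra R L)[X] :=
  DirectSum.toModule R ℤ _
      (fun d ↦ ((monomial (-d).toNat).restrictScalars R ∘ₗ (ι R).toLinearMap) ∘ₗ (𝓖 d).subtype)
    ∘ₗ (DirectSum.decomposeLinearEquiv 𝓖).toLinearMap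

theorem weightedι_of_mem {d : ℤ} {x : L} (hx : x ∈ 𝓖 d) :
    weightedι 𝓖 x = monomial (-d).toNat (ι R x) := by
  rw [weightedι, LinearMap.comp_apply, LinearEquiv.coe_coe,
    DirectSum.decomposeLinearEquiv_apply, DirectSum.decompose_of_mem 𝓖 hx,
    ← DirectSum.lof_eq_of R, DirectSum.toModule_lof]
  rfl

variable {𝓖} (hneg : ∀ d : ℤ, 0 ≤ d → 𝓖 d = ⊥)
include hneg

theorem weightedι_lie_of_mem (hbrack : ∀ c d : ℤ, ∀ x ∈ 𝓖 c, ∀ y ∈ 𝓖 d, ⁅x, y⁆ ∈ 𝓖 (c + d))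
    {c d : ℤ} {x y : L} (hx : x ∈ 𝓖 c) (hy : y ∈ 𝓖 d) :
    weightedι 𝓖 ⁅x, y⁆ = ⁅weightedι 𝓖 x, weightedι 𝓖 y⁆ := by
  rcases le_or_gt 0 c with hc | hc
  · simp [eq_zero_of_mem_of_nonneg 𝓖 hneg hc hx]
  rcases le_or_gt 0 d with hd | hd
  · simp [eq_zero_of_mem_of_nonneg 𝓖 hneg hd hy]
  rw [weightedι_of_mem 𝓖 (hbrack c d x hx y hy), weightedι_of_mem 𝓖 hx, weightedι_of_mem 𝓖 hy,
    Ring.lie_def, monomial_mul_monomial, monomial_mul_monomial, add_comm (-d).toNat, ← map_sub,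
    LieHom.map_lie, Ring.lie_def, show (-(c + d)).toNat = (-c).toNat + (-d).toNat by omega]

theorem weightedι_lie (hbrack : ∀ c d : ℤ, ∀ x ∈ 𝓖 c, ∀ y ∈ 𝓖 d, ⁅x, y⁆ ∈ 𝓖 (c + d))
    (x y : L) : weightedι 𝓖 ⁅x, y⁆ = ⁅weightedι 𝓖 x, weightedι 𝓖 y⁆ := by
  induction x using DirectSum.Decomposition.inductionOn 𝓖 with
  | zero => simp
  | add x x' hx hx' => rw [add_lie, map_add, hx, hx', map_add, add_lie]
  | homogeneous x =>
    induction y using DirectSum.Decomposition.inductionOn 𝓖 with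
    | zero => simp
    | add y y' hy hy' => rw [lie_add, map_add, hy, hy', map_add, lie_add]
    | homogeneous y => exact weightedι_lie_of_mem hneg hbrack x.2 y.2

def weightedιLieHom (hbrack : ∀ c d : ℤ, ∀ x ∈ 𝓖 c, ∀ y ∈ 𝓖 d, ⁅x, y⁆ ∈ 𝓖 (c + d)) :
    L →ₗ⁅R⁆ (UniversalEnvelopingAlgebra R L)[X] :=
  { weightedι 𝓖 with map_lie' := weightedι_lie hneg hbrack _ _ }

theorem X_dvd_weightedι (x : L) : X ∣ weightedι 𝓖 x := by
  induction x using DirectSum.Decomposition.inductionOn 𝓖 with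
  | zero => simp
  | add x x' hx hx' => exact map_add (weightedι 𝓖) x x' ▸ dvd_add hx hx'
  | @homogeneous d x =>
    rcases le_or_gt 0 d with hd | hd
    · simp [eq_zero_of_mem_of_nonneg 𝓖 hneg hd x.2]
    · rw [weightedι_of_mem 𝓖 x.2, show (-d).toNat = (-d).toNat - 1 + 1 by omega,
        ← X_mul_monomial]
      exact dvd_mul_right _ _

variable (hbrack : ∀ c d : ℤ, ∀ x ∈ 𝓖 c, ∀ y ∈ 𝓖 d, ⁅x, y⁆ ∈ 𝓖 (c + d))

def weightedLift : UniversalEnvelopingAlgebra R L →ₐ[R] (UniversalEnvelopingAlgebra R L)[X] :=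
  lift R (weightedιLieHom hneg hbrack)

theorem map_range_ι_le_multiplesOfXPow_one :
    (LinearMap.range (ι R (L := L)).toLinearMap).map (weightedLift hneg hbrack).toLinearMap ≤
      multiplesOfXPow R _ 1 := by
  rintro _ ⟨_, ⟨x, rfl⟩, rfl⟩
  rw [mem_multiplesOfXPow, pow_one]
  exact (lift_ι_apply R (weightedιLieHom hneg hbrack) x).symm ▸ X_dvd_weightedι hneg x

omit hneg in
theorem evalOneAlgHom_weightedι (x : L) : evalOneAlgHom (R := R) (weightedι 𝓖 x) = ι R x := by
  induction x using DirectSum.Decomposition.inductionOn 𝓖 with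
  | zero => simp
  | add x x' hx hx' => rw [map_add, map_add, hx, hx', map_add]
  | homogeneous x => rw [weightedι_of_mem 𝓖 x.2, evalOneAlgHom_monomial]

theorem evalOneAlgHom_comp_weightedLift :
    evalOneAlgHom.comp (weightedLift hneg hbrack) = AlgHom.id R _ := by
  ext x
  exact (congrArg _ (lift_ι_apply R (weightedιLieHom hneg hbrack) x)).trans
    (evalOneAlgHom_weightedι x)

theorem weightedLift_injective : Function.Injective (weightedLift hneg hbrack) :=
  Function.LeftInverse.injective (g := evalOneAlgHom (R := R))
    (AlgHom.congr_fun (evalOneAlgHom_comp_weightedLift hneg hbrack))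

end UniversalEnvelopingAlgebra

end

theorem stmt3_general (L : Type*) [LieRing L] [LieAlgebra ℂ L]
    (𝓖 : ℤ → Submodule ℂ L)
    (hdecomp : DirectSum.IsInternal 𝓖)
    (hneg : ∀ d : ℤ, 0 ≤ d → 𝓖 d = ⊥)
    (hbrack : ∀ c d : ℤ, ∀ x ∈ 𝓖 c, ∀ y ∈ 𝓖 d, ⁅x, y⁆ ∈ 𝓖 (c + d)) :
    (⨅ i : ℕ,
      (⊤ : Submodule ℂ (UniversalEnvelopingAlgebra ℂ L)) *
        (LinearMap.range (UniversalEnvelopingAlgebra.ι ℂ (L := L)).toLinearMap) ^ i)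
      = ⊥ := by
  let := hdecomp.chooseDecomposition
  set Φ := weightedLift hneg hbrack
  refine eq_bot_iff.2 fun u hu ↦ (Submodule.mem_bot ℂ).2 ?_
  have hΦu : Φ u ∈ ⨅ i, multiplesOfXPow ℂ _ i := (Submodule.mem_iInf _).2 fun i ↦
    map_top_mul_pow_le_multiplesOfXPow Φ (map_range_ι_le_multiplesOfXPow_one hneg hbrack) i
      ⟨u, (Submodule.mem_iInf _).1 hu i, rfl⟩
  rw [iInf_multiplesOfXPow, Submodule.mem_bot] at hΦu
  exact (injective_iff_map_eq_zero Φ).1 (weightedLift_injective hneg hbrack) u hΦu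

/-- Let `m` be a finite-dimensional complex Lie algebra with a grading
`m = ⊕_{d<0} m(d)` by strictly negative integers.  Then the intersection over all
`i ≥ 0` of the left ideals `U(m)·m^i` of the universal enveloping algebra is zero,
where `m^i` denotes the span of products of `i` elements of `m`. -/
theorem stmt3 (L : Type*) [LieRing L] [LieAlgebra ℂ L] [FiniteDimensional ℂ L]
    (𝓖 : ℤ → Submodule ℂ L)
    (hdecomp : DirectSum.IsInternal 𝓖)
    (hneg : ∀ d : ℤ, 0 ≤ d → 𝓖 d = ⊥)
    (hbrack : ∀ c d : ℤ, ∀ x ∈ 𝓖 c, ∀ y ∈ 𝓖 d, ⁅x, y⁆ ∈ 𝓖 (c + d)) :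
    (⨅ i : ℕ,
      (⊤ : Submodule ℂ (UniversalEnvelopingAlgebra ℂ L)) *
        (LinearMap.range (UniversalEnvelopingAlgebra.ι ℂ (L := L)).toLinearMap) ^ i)
      = ⊥ :=
  stmt3_general L 𝓖 hdecomp hneg hbrack
end

section
/- For any permutation w in the symmetric group S_N, the recording tableau of the Robinson–Schensted correspondence applied to w equals the insertion tableau of the Robinson–Schensted correspondence applied to w⁻¹; that is, Q(w) = P(w⁻¹). -/
/-- Schensted bumping of `x` into a row: replace the leftmost entry `y > x` by `x`
(returning the bumped entry), or append `x` at the end of the row. -/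
def bump (x : ℕ) : List ℕ → List ℕ × Option ℕ
  | [] => ([x], none)
  | y :: ys =>
    if x < y then (x :: ys, some y)
    else
      let p := bump x ys
      (y :: p.1, p.2)

/-- Schensted insertion of `x` into a tableau (a list of rows, bottom row first). -/
def insertT (x : ℕ) : List (List ℕ) → List (List ℕ)
  | [] => [[x]]
  | row :: rest =>
    match bump x row with
    | (r, none) => r :: rest
    | (r, some y) => r :: insertT y rest

/-- The insertion tableau `P(w)` of a word `w`. -/
def Ptab (w : List ℕ) : List (List ℕ) :=
  w.foldl (fun t x => insertT x t) []

/-- Update the recording tableau: append the label `k` to the row of `q` where the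
shape grew when passing from `p` to `p'`. -/
def Qstep (p p' q : List (List ℕ)) (k : ℕ) : List (List ℕ) :=
  (List.range p'.length).map fun i =>
    if (p.getD i []).length < (p'.getD i []).length then (q.getD i []) ++ [k]
    else q.getD i []

/-- The pair `(P(w), Q(w))` of the Robinson–Schensted correspondence: `P` is built by
Schensted insertion of the letters of `w`, and `Q` records the order in which boxes
are added. -/
def PQ (w : List ℕ) : List (List ℕ) × List (List ℕ) :=
  (List.range w.length).foldl
    (fun pq k =>
      let p' := insertT (w.getD k 0) pq.1
      (p', Qstep pq.1 p' pq.2 (k + 1)))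
    ([], [])

/-- The word `w(1), …, w(N)` of a permutation `w ∈ S_N` (with values in `{1,…,N}`). -/
def word {N : ℕ} (w : Equiv.Perm (Fin N)) : List ℕ :=
  List.ofFn fun i : Fin N => (w i : ℕ) + 1

/-!
Encode `w` as the two-line array of pairs `(i, w i)`; then `w⁻¹` is the transposed array, re-sorted
by its new labels. Following Knuth and Viennot, give each point the length of the longest chain
ending at it that increases in both coordinates (its height); the points of equal height are the
piles of patience sorting. Row insertion of the array fills the first row of `P` with the least
value of each pile and the first row of `Q` with the least label of each pile, and passes to the
second row the array of pairs `(p.1, q.2)`, where `p` bumps `q`: `q` is the point of `p`'s pile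
whose value is the least one above `p.2`. Chains, heights and piles are symmetric under
transposition, and so is the bumping relation, with the roles of `p` and `q` exchanged. Hence the
first row of `P(w⁻¹)` is the first row of `Q(w)`, the array passed on for `w⁻¹` is the transpose
of the one for `w`, and induction on the size of the array concludes.
-/

open List

namespace RobinsonSchensted

section RowInsertion

theorem bump_of_findIdx_lt {x : ℕ} {row : List ℕ} (h : row.findIdx (x < ·) < row.length) :
    bump x row = (row.set (row.findIdx (x < ·)) x, some (row.getD (row.findIdx (x < ·)) 0)) := by
  induction row with
  | nil => simp at h
  | cons y ys ih =>
    by_cases hxy : x < y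
    · simp [bump, hxy, findIdx_cons]
    · simp only [findIdx_cons, hxy, decide_false, cond_false, length_cons,
        Nat.add_lt_add_iff_right] at h ⊢
      simp [bump, hxy, ih h]

theorem bump_of_findIdx_eq_length {x : ℕ} {row : List ℕ}
    (h : row.findIdx (x < ·) = row.length) : bump x row = (row ++ [x], none) := by
  induction row with
  | nil => rfl
  | cons y ys ih =>
    by_cases hxy : x < y
    · simp [hxy, findIdx_cons] at h
    · simp only [findIdx_cons, hxy, decide_false, cond_false, length_cons,
        Nat.add_right_cancel_iff] at h
      simp [bump, hxy, ih h]

theorem length_of_bump_eq_none {x : ℕ} {row r : List ℕ} (h : bump x row = (r, none)) :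
    r.length = row.length + 1 := by
  rcases (findIdx_le_length (xs := row) (p := (x < ·))).lt_or_eq with hlt | heq
  · simp [bump_of_findIdx_lt hlt] at h
  · simp only [bump_of_findIdx_eq_length heq, Prod.mk.injEq] at h
    simp [← h.1]

theorem length_of_bump_eq_some {x y : ℕ} {row r : List ℕ} (h : bump x row = (r, some y)) :
    r.length = row.length := by
  rcases (findIdx_le_length (xs := row) (p := (x < ·))).lt_or_eq with hlt | heq
  · simp only [bump_of_findIdx_lt hlt, Prod.mk.injEq] at h
    simp [← h.1]
  · simp [bump_of_findIdx_eq_length heq] at h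

def growthRow (x : ℕ) : List (List ℕ) → ℕ
  | [] => 0
  | row :: rest =>
    match bump x row with
    | (_, none) => 0
    | (_, some y) => growthRow y rest + 1

theorem growthRow_le_length (x : ℕ) (t : List (List ℕ)) : growthRow x t ≤ t.length := by
  induction t generalizing x with
  | nil => simp [growthRow]
  | cons row rest ih =>
    rcases h : bump x row with ⟨r, _ | y⟩
    · simp [growthRow, h]
    · simpa [growthRow, h] using ih y

theorem length_insertT (x : ℕ) (t : List (List ℕ)) :
    (insertT x t).length = max t.length (growthRow x t + 1) := by
  induction t generalizing x with
  | nil => simp [insertT, growthRow]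
  | cons row rest ih =>
    rcases h : bump x row with ⟨r, _ | y⟩
    · simp only [insertT, growthRow, h, length_cons]; omega
    · simp only [insertT, growthRow, h, length_cons, ih y]; omega

theorem length_getD_insertT (x : ℕ) (t : List (List ℕ)) (i : ℕ) :
    ((insertT x t).getD i []).length
      = (t.getD i []).length + if i = growthRow x t then 1 else 0 := by
  induction t generalizing x i with
  | nil => cases i <;> simp [insertT, growthRow]
  | cons row rest ih =>
    rcases h : bump x row with ⟨r, _ | y⟩ <;> cases i
    · simpa [insertT, growthRow, h] using length_of_bump_eq_none h
    · simp [insertT, growthRow, h]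
    · simpa [insertT, growthRow, h] using length_of_bump_eq_some h
    · simpa [insertT, growthRow, h] using ih y _

end RowInsertion

section Recording

def appendToRow (g : ℕ) (q : List (List ℕ)) (k : ℕ) : List (List ℕ) :=
  if g < q.length then q.set g (q.getD g [] ++ [k]) else q ++ [[k]]

theorem length_appendToRow {g k : ℕ} {q : List (List ℕ)} (h : g ≤ q.length) :
    (appendToRow g q k).length = max q.length (g + 1) := by
  unfold appendToRow; split <;> simp <;> omega

theorem getD_appendToRow {g k : ℕ} {q : List (List ℕ)} (h : g ≤ q.length) (i : ℕ) :
    (appendToRow g q k).getD i [] = q.getD i [] ++ if i = g then [k] else [] := by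
  unfold appendToRow
  split_ifs with hg hig hig
  · subst hig; simp [hg]
  · simp [Ne.symm hig]
  · subst hig; simp [(Nat.not_lt.mp hg).antisymm h]
  · have : i ≠ q.length := (Nat.not_lt.mp hg).antisymm h ▸ hig
    simp only [getD_eq_getElem?_getD, getElem?_append, getElem?_singleton, append_nil]
    split_ifs <;> simp_all
    omega

theorem appendToRow_succ_cons {g k : ℕ} {s : List ℕ} {q : List (List ℕ)} :
    appendToRow (g + 1) (s :: q) k = s :: appendToRow g q k := by
  unfold appendToRow; split_ifs <;> simp_all

def SameShape (p q : List (List ℕ)) : Prop :=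
  p.length = q.length ∧ ∀ i, (p.getD i []).length = (q.getD i []).length

theorem Qstep_insertT {p q : List (List ℕ)} (hpq : SameShape p q) (x k : ℕ) :
    Qstep p (insertT x p) q k = appendToRow (growthRow x p) q k := by
  have hg : growthRow x p ≤ q.length := hpq.1 ▸ growthRow_le_length x p
  apply ext_getElem
  · simp [Qstep, length_insertT, length_appendToRow hg, hpq.1]
  · intro i _ h
    rw [← getD_eq_getElem _ [] h, getD_appendToRow hg]
    simp only [Qstep, getElem_map, getElem_range, length_getD_insertT]
    split_ifs <;> simp_all

theorem SameShape.insertT_appendToRow {p q : List (List ℕ)} (hpq : SameShape p q) (x k : ℕ) :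
    SameShape (insertT x p) (appendToRow (growthRow x p) q k) := by
  have hg : growthRow x p ≤ q.length := hpq.1 ▸ growthRow_le_length x p
  refine ⟨by rw [length_insertT, length_appendToRow hg, hpq.1], fun i => ?_⟩
  rw [length_getD_insertT, getD_appendToRow hg, length_append, hpq.2 i]
  split_ifs <;> simp

end Recording

section TwoLineArrays

/-- An entry of a two-line array is a pair `(label, value)`: the value is inserted into `P`, the
label recorded in `Q`. -/
def rsStep (pq : List (List ℕ) × List (List ℕ)) (a : ℕ × ℕ) : List (List ℕ) × List (List ℕ) :=
  (insertT a.2 pq.1, appendToRow (growthRow a.2 pq.1) pq.2 a.1)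

def rs (A : List (ℕ × ℕ)) : List (List ℕ) × List (List ℕ) :=
  A.foldl rsStep ([], [])

theorem rs_append_singleton (A : List (ℕ × ℕ)) (a : ℕ × ℕ) :
    rs (A ++ [a]) = rsStep (rs A) a :=
  foldl_append ..

/-- `bumped` collects the pairs `(label, bumped value)` passed on to the rows below, `labels` the
labels of the boxes added to the row itself. -/
structure FirstRow where
  row : List ℕ
  bumped : List (ℕ × ℕ)
  labels : List ℕ

def FirstRow.step (s : FirstRow) (a : ℕ × ℕ) : FirstRow :=
  match bump a.2 s.row with
  | (r, none) => ⟨r, s.bumped, s.labels ++ [a.1]⟩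
  | (r, some y) => ⟨r, s.bumped ++ [(a.1, y)], s.labels⟩

def FirstRow.run (row : List ℕ) (A : List (ℕ × ℕ)) : FirstRow :=
  A.foldl FirstRow.step ⟨row, [], []⟩

def firstRow (A : List (ℕ × ℕ)) : FirstRow :=
  FirstRow.run [] A

theorem FirstRow.foldl_step (A : List (ℕ × ℕ)) (row : List ℕ) (e : List (ℕ × ℕ))
    (c : List ℕ) : A.foldl step ⟨row, e, c⟩
      = ⟨(run row A).row, e ++ (run row A).bumped, c ++ (run row A).labels⟩ := by
  induction A generalizing row e c with
  | nil => simp [run]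
  | cons a A ih =>
    simp only [run, foldl_cons, step]
    rcases bump a.2 row with ⟨r, _ | y⟩ <;> simp [ih]

theorem FirstRow.run_cons (row : List ℕ) (a : ℕ × ℕ) (A : List (ℕ × ℕ)) :
    run row (a :: A) = match bump a.2 row with
      | (r, none) => ⟨(run r A).row, (run r A).bumped, a.1 :: (run r A).labels⟩
      | (r, some y) => ⟨(run r A).row, (a.1, y) :: (run r A).bumped, (run r A).labels⟩ := by
  rw [run, foldl_cons, step]
  rcases bump a.2 row with ⟨r, _ | y⟩ <;> simp [foldl_step]

theorem foldl_rsStep_cons (A : List (ℕ × ℕ)) (row : List ℕ) (rest : List (List ℕ))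
    (s : List ℕ) (qrest : List (List ℕ)) :
    A.foldl rsStep (row :: rest, s :: qrest)
      = ((FirstRow.run row A).row :: ((FirstRow.run row A).bumped.foldl rsStep (rest, qrest)).1,
         (s ++ (FirstRow.run row A).labels) ::
            ((FirstRow.run row A).bumped.foldl rsStep (rest, qrest)).2) := by
  induction A generalizing row rest s qrest with
  | nil => simp [FirstRow.run]
  | cons a A ih =>
    rw [foldl_cons, FirstRow.run_cons]
    rcases h : bump a.2 row with ⟨r, _ | y⟩
    · have hstep : rsStep (row :: rest, s :: qrest) a = (r :: rest, (s ++ [a.1]) :: qrest) := by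
        simp [rsStep, insertT, growthRow, h, appendToRow]
      simp [hstep, ih]
    · have hstep : rsStep (row :: rest, s :: qrest) a
          = (r :: insertT y rest, s :: appendToRow (growthRow y rest) qrest a.1) := by
        simp [rsStep, insertT, growthRow, h, appendToRow_succ_cons]
      rw [hstep, ih]
      rfl

theorem rs_eq_cons {A : List (ℕ × ℕ)} (hA : A ≠ []) :
    rs A = ((firstRow A).row :: (rs (firstRow A).bumped).1,
      (firstRow A).labels :: (rs (firstRow A).bumped).2) := by
  obtain ⟨a, A, rfl⟩ := exists_cons_of_ne_nil hA
  have hstep : rsStep ([], []) a = ([[a.2]], [[a.1]]) := by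
    simp [rsStep, insertT, growthRow, appendToRow]
  rw [rs, foldl_cons, hstep, foldl_rsStep_cons, firstRow, FirstRow.run_cons]
  rfl

end TwoLineArrays

section Chains

def Precedes (a b : ℕ × ℕ) : Prop :=
  a.1 < b.1 ∧ a.2 < b.2

theorem Precedes.trans {a b c : ℕ × ℕ} (hab : Precedes a b) (hbc : Precedes b c) :
    Precedes a c :=
  ⟨hab.1.trans hbc.1, hab.2.trans hbc.2⟩

theorem Precedes.irrefl (a : ℕ × ℕ) : ¬Precedes a a :=
  fun h => lt_irrefl _ h.1

def HasChain (A : List (ℕ × ℕ)) (p : ℕ × ℕ) (k : ℕ) : Prop :=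
  ∃ c : List (ℕ × ℕ), c ⊆ A ∧ c.Pairwise Precedes ∧ c.getLast? = some p ∧ c.length = k

open Classical in
noncomputable def height (A : List (ℕ × ℕ)) (p : ℕ × ℕ) : ℕ :=
  Nat.findGreatest (HasChain A p) A.length

variable {A : List (ℕ × ℕ)} {p q r : ℕ × ℕ} {k : ℕ}

theorem precedes_of_mem_of_getLast? {c : List (ℕ × ℕ)} (hc : c.Pairwise Precedes)
    (hp : c.getLast? = some p) (hq : q ∈ c) : q = p ∨ Precedes q p := by
  obtain ⟨d, rfl⟩ := getLast?_eq_some_iff.mp hp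
  rcases mem_append.mp hq with hq | hq
  · exact Or.inr ((pairwise_append.mp hc).2.2 q hq p (mem_singleton_self p))
  · exact Or.inl (mem_singleton.mp hq)

theorem HasChain.mem (h : HasChain A p k) : p ∈ A := by
  obtain ⟨c, hcA, -, hp, -⟩ := h
  exact hcA (mem_of_getLast? hp)

theorem HasChain.length_le (h : HasChain A p k) : k ≤ A.length := by
  obtain ⟨c, hcA, hc, -, rfl⟩ := h
  exact (subperm_of_subset (hc.imp fun h => ne_of_apply_ne Prod.fst h.1.ne) hcA).length_le

theorem hasChain_one (hp : p ∈ A) : HasChain A p 1 :=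
  ⟨[p], by simpa using hp, pairwise_singleton _ _, rfl, rfl⟩

theorem HasChain.snoc (h : HasChain A q k) (hqp : Precedes q p) (hp : p ∈ A) :
    HasChain A p (k + 1) := by
  obtain ⟨c, hcA, hc, hq, rfl⟩ := h
  refine ⟨c ++ [p], append_subset.mpr ⟨hcA, by simpa using hp⟩,
    pairwise_append.mpr ⟨hc, pairwise_singleton _ _, ?_⟩, getLast?_concat, by simp⟩
  intro x hx y hy
  obtain rfl := mem_singleton.mp hy
  rcases precedes_of_mem_of_getLast? hc hq hx with rfl | hxq
  exacts [hqp, hxq.trans hqp]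

theorem HasChain.exists_precedes (h : HasChain A p (k + 1)) (hk : k ≠ 0) :
    ∃ q, HasChain A q k ∧ Precedes q p := by
  obtain ⟨c, hcA, hc, hp, hlen⟩ := h
  obtain ⟨d, rfl⟩ := getLast?_eq_some_iff.mp hp
  have hd : d ≠ [] := by rintro rfl; simp at hlen; omega
  obtain ⟨hd', -, hdp⟩ := pairwise_append.mp hc
  refine ⟨d.getLast hd, ⟨d, fun x hx => hcA (mem_append_left _ hx), hd',
    getLast?_eq_some_getLast hd, by simpa using hlen⟩,
    hdp _ (getLast_mem hd) _ (mem_singleton_self p)⟩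

open Classical in
theorem HasChain.le_height (h : HasChain A p k) : k ≤ height A p :=
  Nat.le_findGreatest h.length_le h

open Classical in
theorem hasChain_height (hp : p ∈ A) : HasChain A p (height A p) :=
  Nat.findGreatest_spec (hasChain_one hp).length_le (hasChain_one hp)

theorem one_le_height (hp : p ∈ A) : 1 ≤ height A p :=
  (hasChain_one hp).le_height

theorem height_le_of_hasChain_imp {A' : List (ℕ × ℕ)} {p' : ℕ × ℕ}
    (h : ∀ k, HasChain A p k → HasChain A' p' k) : height A p ≤ height A' p' := by
  classical
  rcases Nat.eq_zero_or_pos (height A p) with h0 | hpos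
  · exact h0 ▸ Nat.zero_le _
  · exact (h _ (Nat.findGreatest_of_ne_zero rfl hpos.ne')).le_height

theorem height_lt_height (hq : q ∈ A) (hqp : Precedes q p) (hp : p ∈ A) :
    height A q < height A p :=
  ((hasChain_height hq).snoc hqp hp).le_height

theorem exists_precedes_height_eq_pred (hp : p ∈ A) (h2 : 2 ≤ height A p) :
    ∃ q ∈ A, height A q = height A p - 1 ∧ Precedes q p := by
  have hch := hasChain_height hp
  rw [show height A p = height A p - 1 + 1 by omega] at hch
  obtain ⟨q, hq, hqp⟩ := hch.exists_precedes (by omega)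
  have := height_lt_height hq.mem hqp hp
  exact ⟨q, hq.mem, le_antisymm (by omega) hq.le_height, hqp⟩

theorem exists_precedes_height_eq (hp : p ∈ A) {j : ℕ} (hj : 1 ≤ j) (hjp : j < height A p) :
    ∃ q ∈ A, height A q = j ∧ Precedes q p := by
  induction hh : height A p using Nat.strong_induction_on generalizing p with
  | _ n ih =>
    obtain ⟨q, hq, hqh, hqp⟩ := exists_precedes_height_eq_pred hp (by omega)
    rcases (show j ≤ height A q by omega).eq_or_lt with rfl | hjq
    · exact ⟨q, hq, rfl, hqp⟩
    · obtain ⟨r, hr, hrh, hrq⟩ := ih _ (by omega) hq hjq rfl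
      exact ⟨r, hr, hrh, hrq.trans hqp⟩

theorem snd_lt_of_height_eq (hA : (A.map Prod.snd).Nodup) (hp : p ∈ A) (hq : q ∈ A)
    (hh : height A p = height A q) (h1 : p.1 < q.1) : q.2 < p.2 := by
  rcases lt_trichotomy q.2 p.2 with h | h | h
  · exact h
  · obtain rfl := inj_on_of_nodup_map hA hq hp h
    exact absurd h1 (lt_irrefl _)
  · exact absurd hh (height_lt_height hp ⟨h1, h⟩ hq).ne

end Chains

section Piles

noncomputable def maxHeight (A : List (ℕ × ℕ)) : ℕ :=
  A.toFinset.sup (height A)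

/-- Piles are indexed from `0`: pile `c` consists of the points of height `c + 1`. -/
noncomputable def pile (A : List (ℕ × ℕ)) (c : ℕ) : List (ℕ × ℕ) :=
  A.filter (height A · = c + 1)

/-- `0` on an empty pile. -/
noncomputable def pileMin (f : ℕ × ℕ → ℕ) (A : List (ℕ × ℕ)) (c : ℕ) : ℕ :=
  ((pile A c).map f).min?.getD 0

noncomputable def pileMins (f : ℕ × ℕ → ℕ) (A : List (ℕ × ℕ)) : List ℕ :=
  (range (maxHeight A)).map (pileMin f A)

variable {A : List (ℕ × ℕ)} {p q : ℕ × ℕ} {c : ℕ} {f : ℕ × ℕ → ℕ}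

theorem mem_pile : q ∈ pile A c ↔ q ∈ A ∧ height A q = c + 1 := by
  simp [pile]

theorem height_le_maxHeight (hq : q ∈ A) : height A q ≤ maxHeight A :=
  Finset.le_sup (mem_toFinset.mpr hq)

theorem exists_mem_pile (hc : c < maxHeight A) : ∃ q, q ∈ pile A c := by
  have hA : A.toFinset.Nonempty := by
    by_contra h
    simp_all [maxHeight, Finset.not_nonempty_iff_eq_empty.mp h]
  obtain ⟨p, hp, hph⟩ := Finset.exists_mem_eq_sup _ hA (height A)
  rw [mem_toFinset] at hp
  rcases (show c + 1 ≤ height A p from hph ▸ hc).eq_or_lt with hpc | hpc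
  · exact ⟨p, mem_pile.mpr ⟨hp, hpc.symm⟩⟩
  · obtain ⟨q, hq, hqh, -⟩ := exists_precedes_height_eq hp (by omega) hpc
    exact ⟨q, mem_pile.mpr ⟨hq, hqh⟩⟩

theorem pileMin_le (hq : q ∈ A) (hqc : height A q = c + 1) : pileMin f A c ≤ f q :=
  min?_getD_le_of_mem (mem_map_of_mem (mem_pile.mpr ⟨hq, hqc⟩))

theorem pileMin_snd_le (hq : q ∈ A) (hc : c < height A q) : pileMin Prod.snd A c ≤ q.2 := by
  rcases (show c + 1 ≤ height A q from hc).eq_or_lt with h | h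
  · exact pileMin_le hq h.symm
  · obtain ⟨r, hr, hrh, hrq⟩ := exists_precedes_height_eq hq (j := c + 1) (by omega) h
    exact (pileMin_le hr hrh).trans hrq.2.le

theorem exists_pileMin_eq (hc : c < maxHeight A) :
    ∃ q ∈ A, height A q = c + 1 ∧ f q = pileMin f A c := by
  obtain ⟨q₀, hq₀⟩ := exists_mem_pile hc
  obtain ⟨m, hm⟩ := Option.isSome_iff_exists.mp
    (isSome_min?_of_mem (mem_map_of_mem (f := f) hq₀))
  obtain ⟨q, hq, hqm⟩ := mem_map.mp (min?_mem hm)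
  exact ⟨q, (mem_pile.mp hq).1, (mem_pile.mp hq).2, by simp [pileMin, hm, hqm]⟩

theorem pileMin_eq {m : ℕ} (hm : ∃ q ∈ pile A c, f q = m) (hle : ∀ q ∈ pile A c, m ≤ f q) :
    pileMin f A c = m := by
  obtain ⟨q, hq, rfl⟩ := hm
  rw [pileMin, min?_eq_some_iff.mpr ⟨mem_map_of_mem hq, forall_mem_map.mpr hle⟩, Option.getD_some]

theorem length_pileMins : (pileMins f A).length = maxHeight A := by
  simp [pileMins]

theorem getElem_pileMins (hc : c < (pileMins f A).length) : (pileMins f A)[c] = pileMin f A c := by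
  simp [pileMins]

end Piles

section Bumping

/-- The two-line array of an injective partial map `ℕ → ℕ`. -/
def IsPermArray (A : List (ℕ × ℕ)) : Prop :=
  (A.map Prod.fst).Pairwise (· < ·) ∧ (A.map Prod.snd).Nodup

def InPileAbove (A : List (ℕ × ℕ)) (p r : ℕ × ℕ) : Prop :=
  r ∈ A ∧ height A r = height A p ∧ p.2 < r.2

/-- Inserting `p` bumps the value of `q` out of the first row (see `firstRow_eq`). -/
def Bumps (A : List (ℕ × ℕ)) (p q : ℕ × ℕ) : Prop :=
  p ∈ A ∧ InPileAbove A p q ∧ ∀ r, InPileAbove A p r → q.2 ≤ r.2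

open Classical in
noncomputable def bumpee (A : List (ℕ × ℕ)) (p : ℕ × ℕ) : Option (ℕ × ℕ) :=
  A.find? (Bumps A p ·)

noncomputable def bumpedArray (A : List (ℕ × ℕ)) : List (ℕ × ℕ) :=
  A.filterMap fun p => (bumpee A p).map fun q => (p.1, q.2)

variable {A : List (ℕ × ℕ)} {p p' q q' : ℕ × ℕ}

theorem nodup_of_pairwise_map_fst (hA : (A.map Prod.fst).Pairwise (· < ·)) : A.Nodup :=
  Nodup.of_map Prod.fst (hA.imp ne_of_lt)

theorem Bumps.unique (hA : (A.map Prod.snd).Nodup) (h : Bumps A p q) (h' : Bumps A p q') :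
    q = q' :=
  inj_on_of_nodup_map hA h.2.1.1 h'.2.1.1 ((h.2.2 q' h'.2.1).antisymm (h'.2.2 q h.2.1))

theorem Bumps.left_unique (hA : (A.map Prod.snd).Nodup) (h : Bumps A p q) (h' : Bumps A p' q) :
    p = p' := by
  have above {p p'} (h : Bumps A p q) (h' : Bumps A p' q) : ¬p.2 < p'.2 := fun hlt =>
    absurd (h.2.2 p' ⟨h'.1, h'.2.1.2.1.symm.trans h.2.1.2.1, hlt⟩) (not_le.mpr h'.2.1.2.2)
  exact inj_on_of_nodup_map hA h.1 h'.1
    (le_antisymm (not_lt.mp (above h' h)) (not_lt.mp (above h h')))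

theorem bumps_of_bumpee_eq_some (h : bumpee A p = some q) : Bumps A p q := by
  simpa using find?_some h

theorem bumpee_eq_some_iff (hA : (A.map Prod.snd).Nodup) :
    bumpee A p = some q ↔ Bumps A p q := by
  refine ⟨bumps_of_bumpee_eq_some, fun h => ?_⟩
  cases hb : bumpee A p with
  | none =>
    rw [bumpee, find?_eq_none] at hb
    exact absurd (by simpa using h) (hb q h.2.1.1)
  | some q' => rw [(bumps_of_bumpee_eq_some hb).unique hA h]

theorem bumpee_eq_none_iff : bumpee A p = none ↔ ∀ q, ¬Bumps A p q := by
  simp only [bumpee, find?_eq_none, decide_eq_true_eq]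
  exact ⟨fun h q hq => h q hq.2.1.1 hq, fun h q _ => h q⟩

theorem mem_bumpedArray (hA : (A.map Prod.snd).Nodup) {z : ℕ × ℕ} :
    z ∈ bumpedArray A ↔ ∃ p q, Bumps A p q ∧ z = (p.1, q.2) := by
  simp only [bumpedArray, mem_filterMap, Option.map_eq_some_iff, bumpee_eq_some_iff hA]
  constructor
  · rintro ⟨p, -, q, hpq, rfl⟩
    exact ⟨p, q, hpq, rfl⟩
  · rintro ⟨p, q, hpq, rfl⟩
    exact ⟨p, hpq.1, q, hpq, rfl⟩

theorem map_fst_bumpedArray_sublist : (bumpedArray A).map Prod.fst <+ A.map Prod.fst := by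
  unfold bumpedArray
  generalize bumpee A = b
  induction A with
  | nil => simp
  | cons p A ih =>
    cases hb : b p <;> simp [hb, ih]

theorem isPermArray_bumpedArray (hA : IsPermArray A) : IsPermArray (bumpedArray A) := by
  have hsorted := hA.1.sublist map_fst_bumpedArray_sublist
  refine ⟨hsorted, Nodup.map_on (fun z hz z' hz' hzz' => ?_) (nodup_of_pairwise_map_fst hsorted)⟩
  obtain ⟨p, q, hpq, rfl⟩ := (mem_bumpedArray hA.2).mp hz
  obtain ⟨p', q', hpq', rfl⟩ := (mem_bumpedArray hA.2).mp hz'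
  obtain rfl : q = q' := inj_on_of_nodup_map hA.2 hpq.2.1.1 hpq'.2.1.1 hzz'
  rw [hpq.left_unique hA.2 hpq']

theorem length_bumpedArray_lt (hA : A ≠ []) : (bumpedArray A).length < A.length := by
  obtain ⟨p, hp, hmax⟩ := A.toFinset.exists_max_image Prod.snd (by simpa using hA)
  refine length_filterMap_lt_length_iff_exists.mpr ⟨p, mem_toFinset.mp hp, ?_⟩
  rw [Option.map_eq_none_iff, bumpee_eq_none_iff]
  exact fun q hq => absurd (hmax q (mem_toFinset.mpr hq.2.1.1)) (not_le.mpr hq.2.1.2.2)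

end Bumping

section AppendSingleton

variable {B : List (ℕ × ℕ)} {p q x y : ℕ × ℕ} {k c : ℕ} {f : ℕ × ℕ → ℕ}

theorem isPermArray_append_singleton :
    IsPermArray (B ++ [p]) ↔ IsPermArray B ∧ (∀ x ∈ B, x.1 < p.1) ∧ ∀ x ∈ B, x.2 ≠ p.2 := by
  simp only [IsPermArray, map_append, pairwise_append, nodup_append, forall_mem_map]
  simp [ne_comm]
  tauto

theorem hasChain_append_singleton_iff (hlt : ∀ x ∈ B, x.1 < p.1) (hq : q ∈ B) :
    HasChain (B ++ [p]) q k ↔ HasChain B q k := by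
  refine ⟨fun ⟨c, hcB, hc, hcq, hlen⟩ => ⟨c, fun x hx => ?_, hc, hcq, hlen⟩,
    fun ⟨c, hcB, hc, hcq, hlen⟩ => ⟨c, fun x hx => mem_append_left _ (hcB hx), hc, hcq, hlen⟩⟩
  rcases mem_append.mp (hcB hx) with hxB | hxp
  · exact hxB
  · obtain rfl := mem_singleton.mp hxp
    rcases precedes_of_mem_of_getLast? hc hcq hx with rfl | hxq
    · exact absurd (hlt x hq) (lt_irrefl _)
    · exact absurd (hlt q hq) (not_lt.mpr hxq.1.le)

theorem height_append_singleton (hlt : ∀ x ∈ B, x.1 < p.1) (hq : q ∈ B) :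
    height (B ++ [p]) q = height B q :=
  le_antisymm (height_le_of_hasChain_imp fun _ => (hasChain_append_singleton_iff hlt hq).mp)
    (height_le_of_hasChain_imp fun _ => (hasChain_append_singleton_iff hlt hq).mpr)

theorem pile_append_singleton (hlt : ∀ x ∈ B, x.1 < p.1) (c : ℕ) :
    pile (B ++ [p]) c = pile B c ++ if height (B ++ [p]) p = c + 1 then [p] else [] := by
  rw [pile, filter_append, pile, filter_congr fun x hx => by rw [height_append_singleton hlt hx]]
  split_ifs <;> simp_all

theorem maxHeight_append_singleton (hlt : ∀ x ∈ B, x.1 < p.1) :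
    maxHeight (B ++ [p]) = max (maxHeight B) (height (B ++ [p]) p) := by
  have hins : (B ++ [p]).toFinset = insert p B.toFinset := by
    ext
    simp
  rw [maxHeight, hins, Finset.sup_insert, maxHeight, Finset.sup_congr rfl fun x hx =>
      height_append_singleton hlt (mem_toFinset.mp hx), max_comm]

theorem height_append_singleton_self_le (hlt : ∀ x ∈ B, x.1 < p.1) :
    height (B ++ [p]) p ≤ (pileMins Prod.snd B).findIdx (p.2 < ·) + 1 := by
  set k := (pileMins Prod.snd B).findIdx (p.2 < ·)
  by_contra! hgt
  obtain ⟨r, hr, hrh, hrp⟩ :=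
    exists_precedes_height_eq_pred (mem_append_right B (mem_singleton_self p)) (by omega)
  have hrB : r ∈ B := (mem_append.mp hr).resolve_right fun h =>
    Precedes.irrefl p (mem_singleton.mp h ▸ hrp)
  rw [height_append_singleton hlt hrB] at hrh
  have hkT : k < (pileMins Prod.snd B).length := by
    have := height_le_maxHeight hrB
    rw [length_pileMins]
    omega
  have hpk : p.2 < pileMin Prod.snd B k := by
    simpa [getElem_pileMins] using findIdx_getElem (w := hkT)
  exact absurd (hpk.trans_le (pileMin_snd_le hrB (by omega))) (not_lt.mpr hrp.2.le)

theorem le_height_append_singleton_self (hlt : ∀ x ∈ B, x.1 < p.1) (hne : ∀ x ∈ B, x.2 ≠ p.2) :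
    (pileMins Prod.snd B).findIdx (p.2 < ·) + 1 ≤ height (B ++ [p]) p := by
  set T := pileMins Prod.snd B
  set k := T.findIdx (p.2 < ·)
  have hp : p ∈ B ++ [p] := mem_append_right _ (mem_singleton_self p)
  rcases Nat.eq_zero_or_pos k with hk | hk
  · exact hk ▸ one_le_height hp
  have hkT : k - 1 < T.length := by
    have := findIdx_le_length (xs := T) (p := (p.2 < ·))
    omega
  obtain ⟨q, hq, hqh, hqT⟩ := exists_pileMin_eq (f := Prod.snd) (length_pileMins ▸ hkT)
  have hTp : ¬p.2 < T[k - 1] := by simpa using not_of_lt_findIdx (by omega : k - 1 < k)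
  rw [getElem_pileMins, ← hqT] at hTp
  have hqp : Precedes q p := ⟨hlt q hq, lt_of_le_of_ne (not_lt.mp hTp) (hne q hq)⟩
  have hqk : HasChain (B ++ [p]) q k := (hasChain_append_singleton_iff hlt hq).mpr <| by
    simpa [hqh, Nat.sub_add_cancel hk] using hasChain_height hq
  exact (hqk.snoc hqp hp).le_height

/-- Patience sorting: the new point joins the leftmost pile whose least value exceeds its own. -/
theorem height_append_singleton_self (hlt : ∀ x ∈ B, x.1 < p.1) (hne : ∀ x ∈ B, x.2 ≠ p.2) :
    height (B ++ [p]) p = (pileMins Prod.snd B).findIdx (p.2 < ·) + 1 :=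
  (height_append_singleton_self_le hlt).antisymm (le_height_append_singleton_self hlt hne)

theorem pileMin_append_singleton_of_ne (hlt : ∀ x ∈ B, x.1 < p.1)
    (hc : height (B ++ [p]) p ≠ c + 1) : pileMin f (B ++ [p]) c = pileMin f B c := by
  simp [pileMin, pile_append_singleton hlt, hc]

theorem pileMin_append_singleton_of_lt (hlt : ∀ x ∈ B, x.1 < p.1)
    (hc : height (B ++ [p]) p = c + 1) (hcB : c < maxHeight B) :
    pileMin f (B ++ [p]) c = min (pileMin f B c) (f p) := by
  apply pileMin_eq
  · rcases le_total (pileMin f B c) (f p) with h | h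
    · obtain ⟨q, hq, hqh, hqf⟩ := exists_pileMin_eq (f := f) hcB
      exact ⟨q, by simp [pile_append_singleton hlt, mem_pile, hq, hqh], by rw [hqf, min_eq_left h]⟩
    · exact ⟨p, by simp [pile_append_singleton hlt, hc], (min_eq_right h).symm⟩
  · intro q hq
    rw [pile_append_singleton hlt, if_pos hc, mem_append, mem_pile, mem_singleton] at hq
    rcases hq with ⟨hqB, hqh⟩ | rfl
    exacts [min_le_of_left_le (pileMin_le hqB hqh), min_le_right _ _]

theorem pileMin_append_singleton_of_eq (hlt : ∀ x ∈ B, x.1 < p.1)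
    (hc : height (B ++ [p]) p = c + 1) (hcB : c = maxHeight B) :
    pileMin f (B ++ [p]) c = f p := by
  have hpile : pile B c = [] := filter_eq_nil_iff.mpr fun q hq => by
    have := height_le_maxHeight hq
    simp only [decide_eq_true_eq]
    omega
  simp [pileMin, pile_append_singleton hlt, hc, hpile]

theorem pileMins_append_singleton_of_lt (hlt : ∀ x ∈ B, x.1 < p.1)
    (hk : height (B ++ [p]) p = k + 1) (hkB : k < maxHeight B) :
    pileMins f (B ++ [p]) = (pileMins f B).set k (min (pileMin f B k) (f p)) := by
  have hmax : maxHeight (B ++ [p]) = maxHeight B := by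
    rw [maxHeight_append_singleton hlt, hk]
    omega
  refine ext_getElem (by simp [length_pileMins, hmax]) fun c _ _ => ?_
  rw [getElem_pileMins, getElem_set, getElem_pileMins]
  split_ifs with hkc
  · exact hkc ▸ pileMin_append_singleton_of_lt hlt hk hkB
  · exact pileMin_append_singleton_of_ne hlt (by omega)

theorem pileMins_append_singleton_of_eq (hlt : ∀ x ∈ B, x.1 < p.1)
    (hk : height (B ++ [p]) p = k + 1) (hkB : k = maxHeight B) :
    pileMins f (B ++ [p]) = pileMins f B ++ [f p] := by
  have hmax : maxHeight (B ++ [p]) = maxHeight B + 1 := by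
    rw [maxHeight_append_singleton hlt, hk]
    omega
  rw [pileMins, hmax, range_succ, map_append, pileMins, map_singleton,
    pileMin_append_singleton_of_eq hlt (hkB ▸ hk) rfl]
  congr 1
  exact map_congr_left fun c hc => pileMin_append_singleton_of_ne hlt (by simp at hc; omega)

theorem inPileAbove_append_singleton_iff (hlt : ∀ x ∈ B, x.1 < p.1)
    (hmin : ∀ q ∈ B, height B q = height (B ++ [p]) p → p.2 < q.2) (hx : x ∈ B) :
    InPileAbove (B ++ [p]) x y ↔ InPileAbove B x y := by
  simp only [InPileAbove, height_append_singleton hlt hx]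
  constructor
  · rintro ⟨hy, hyh, hxy⟩
    rcases mem_append.mp hy with hyB | hyp
    · exact ⟨hyB, height_append_singleton hlt hyB ▸ hyh, hxy⟩
    · obtain rfl := mem_singleton.mp hyp
      exact absurd (hmin x hx hyh.symm) (not_lt.mpr hxy.le)
  · rintro ⟨hyB, hyh, hxy⟩
    exact ⟨mem_append_left _ hyB, (height_append_singleton hlt hyB).trans hyh, hxy⟩

theorem bumpedArray_append_singleton (hv : ((B ++ [p]).map Prod.snd).Nodup)
    (hlt : ∀ x ∈ B, x.1 < p.1) (hmin : ∀ q ∈ B, height B q = height (B ++ [p]) p → p.2 < q.2) :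
    bumpedArray (B ++ [p])
      = bumpedArray B ++ ((bumpee (B ++ [p]) p).map fun q => (p.1, q.2)).toList := by
  have hvB : (B.map Prod.snd).Nodup := hv.sublist (by simp)
  have hbumpee : ∀ x ∈ B, bumpee (B ++ [p]) x = bumpee B x := fun x hx => Option.ext fun y => by
    simp only [bumpee_eq_some_iff hv, bumpee_eq_some_iff hvB, Bumps,
      inPileAbove_append_singleton_iff hlt hmin hx, mem_append_left _ hx, hx, true_and]
  rw [bumpedArray, filterMap_append, filterMap_congr fun x hx => by rw [hbumpee x hx]]
  rcases h : bumpee (B ++ [p]) p with _ | q <;> simp [bumpedArray, h]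

theorem bumpedArray_append_singleton_of_lt (hv : ((B ++ [p]).map Prod.snd).Nodup)
    (hlt : ∀ x ∈ B, x.1 < p.1) (hk : height (B ++ [p]) p = k + 1) (hkB : k < maxHeight B)
    (hpk : p.2 < pileMin Prod.snd B k) :
    bumpedArray (B ++ [p]) = bumpedArray B ++ [(p.1, pileMin Prod.snd B k)] := by
  have hp : p ∈ B ++ [p] := mem_append_right _ (mem_singleton_self p)
  have habove : ∀ r, InPileAbove (B ++ [p]) p r → r ∈ B ∧ height B r = k + 1 := by
    rintro r ⟨hr, hrh, hpr⟩
    have hrB : r ∈ B := (mem_append.mp hr).resolve_right fun h =>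
      lt_irrefl _ (mem_singleton.mp h ▸ hpr)
    exact ⟨hrB, (height_append_singleton hlt hrB).symm.trans (hrh.trans hk)⟩
  obtain ⟨t, ht, hth, htk⟩ := exists_pileMin_eq (f := Prod.snd) hkB
  have hbump : Bumps (B ++ [p]) p t :=
    ⟨hp, ⟨mem_append_left _ ht, (height_append_singleton hlt ht).trans (hth.trans hk.symm),
      htk ▸ hpk⟩, fun r hr => htk ▸ pileMin_le (habove r hr).1 (habove r hr).2⟩
  rw [bumpedArray_append_singleton hv hlt fun q hq hqh => hpk.trans_le (pileMin_le hq (hk ▸ hqh)),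
    (bumpee_eq_some_iff hv).mpr hbump]
  simp [htk]

theorem bumpedArray_append_singleton_of_eq (hv : ((B ++ [p]).map Prod.snd).Nodup)
    (hlt : ∀ x ∈ B, x.1 < p.1) (hk : height (B ++ [p]) p = k + 1) (hkB : k = maxHeight B) :
    bumpedArray (B ++ [p]) = bumpedArray B := by
  have hnot : ∀ q ∈ B, height B q ≠ height (B ++ [p]) p := fun q hq => by
    have := height_le_maxHeight hq
    omega
  have hnone : bumpee (B ++ [p]) p = none := by
    refine bumpee_eq_none_iff.mpr fun r ⟨_, ⟨hr, hrh, hpr⟩, _⟩ => ?_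
    rcases mem_append.mp hr with hrB | hrp
    · exact hnot r hrB (by rw [← hrh, height_append_singleton hlt hrB])
    · exact lt_irrefl _ (mem_singleton.mp hrp ▸ hpr)
  rw [bumpedArray_append_singleton hv hlt fun q hq hqh => absurd hqh (hnot q hq), hnone]
  simp

end AppendSingleton

section FirstRowOfArray

theorem firstRow_append_singleton (B : List (ℕ × ℕ)) (p : ℕ × ℕ) :
    firstRow (B ++ [p]) = (firstRow B).step p := by
  simp only [firstRow, FirstRow.run, foldl_append, foldl_cons, foldl_nil]

theorem firstRow_eq {A : List (ℕ × ℕ)} (hA : IsPermArray A) :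
    firstRow A = ⟨pileMins Prod.snd A, bumpedArray A, pileMins Prod.fst A⟩ := by
  induction A using reverseRecOn with
  | nil => simp [firstRow, FirstRow.run, pileMins, maxHeight, bumpedArray]
  | append_singleton B p ih =>
    obtain ⟨hB, hlt, hne⟩ := isPermArray_append_singleton.mp hA
    set T := pileMins Prod.snd B
    have hk := height_append_singleton_self hlt hne
    rw [firstRow_append_singleton, ih hB, FirstRow.step]
    rcases (findIdx_le_length (xs := T) (p := (p.2 < ·))).lt_or_eq with hkT | hkT
    · set k := T.findIdx (p.2 < ·)
      have hkB : k < maxHeight B := length_pileMins ▸ hkT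
      have hpk : p.2 < pileMin Prod.snd B k := by
        simpa [T, getElem_pileMins] using findIdx_getElem (w := hkT)
      obtain ⟨q, hq, -, hqk⟩ := exists_pileMin_eq (f := Prod.fst) hkB
      have hCk : pileMin Prod.fst B k ≤ p.1 := hqk ▸ (hlt q hq).le
      simp only [bump_of_findIdx_lt hkT, FirstRow.mk.injEq]
      refine ⟨?_, ?_, ?_⟩
      · rw [pileMins_append_singleton_of_lt hlt hk hkB, min_eq_right hpk.le]
      · rw [bumpedArray_append_singleton_of_lt hA.2 hlt hk hkB hpk, getD_eq_getElem _ _ hkT,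
          getElem_pileMins]
      · rw [pileMins_append_singleton_of_lt hlt hk hkB, min_eq_left hCk,
          ← getElem_pileMins (length_pileMins.symm ▸ hkB), set_getElem_self]
    · have hkB : T.findIdx (p.2 < ·) = maxHeight B := hkT.trans length_pileMins
      simp only [bump_of_findIdx_eq_length hkT, FirstRow.mk.injEq]
      exact ⟨(pileMins_append_singleton_of_eq hlt hk hkB).symm,
        (bumpedArray_append_singleton_of_eq hA.2 hlt hk hkB).symm,
        (pileMins_append_singleton_of_eq hlt hk hkB).symm⟩

end FirstRowOfArray

section Transpose

def transpose (A : List (ℕ × ℕ)) : List (ℕ × ℕ) :=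
  (A.map Prod.swap).mergeSort fun a b => a.1 ≤ b.1

variable {A B : List (ℕ × ℕ)} {p q : ℕ × ℕ} {k : ℕ}

theorem transpose_perm (A : List (ℕ × ℕ)) : transpose A ~ A.map Prod.swap :=
  mergeSort_perm _ _

theorem length_transpose (A : List (ℕ × ℕ)) : (transpose A).length = A.length := by
  rw [(transpose_perm A).length_eq, length_map]

theorem mem_transpose {z : ℕ × ℕ} : z ∈ transpose A ↔ z.swap ∈ A := by
  rw [(transpose_perm A).mem_iff, mem_map]
  exact ⟨fun ⟨a, ha, hz⟩ => hz ▸ a.swap_swap.symm ▸ ha, fun h => ⟨z.swap, h, z.swap_swap⟩⟩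

theorem eq_of_pairwise_map_fst_of_mem_iff (hA : (A.map Prod.fst).Pairwise (· < ·))
    (hB : (B.map Prod.fst).Pairwise (· < ·)) (h : ∀ z, z ∈ A ↔ z ∈ B) : A = B := by
  have : Std.Irrefl fun a b : ℕ × ℕ => a.1 < b.1 := ⟨fun a => lt_irrefl a.1⟩
  have : Std.Antisymm fun a b : ℕ × ℕ => a.1 < b.1 :=
    ⟨fun a b hab hba => absurd (hab.trans hba) (lt_irrefl _)⟩
  exact (pairwise_map.mp hA).eq_of_mem_iff (pairwise_map.mp hB) h

theorem isPermArray_transpose (hA : IsPermArray A) : IsPermArray (transpose A) := by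
  have hfst : (transpose A).map Prod.fst ~ A.map Prod.snd := by
    have := (transpose_perm A).map Prod.fst
    rwa [map_map] at this
  have hsnd : (transpose A).map Prod.snd ~ A.map Prod.fst := by
    have := (transpose_perm A).map Prod.snd
    rwa [map_map] at this
  have hle : (transpose A).Pairwise fun a b => a.1 ≤ b.1 := by
    simpa [transpose] using pairwise_mergeSort (le := fun a b : ℕ × ℕ => decide (a.1 ≤ b.1))
      (fun a b c hab hbc => by simp at *; omega) (fun a b => by simp; omega) (A.map Prod.swap)
  refine ⟨pairwise_map.mpr ?_, hsnd.nodup_iff.mpr (hA.1.imp ne_of_lt)⟩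
  exact (hle.and (pairwise_map.mp (hfst.nodup_iff.mpr hA.2))).imp fun h => lt_of_le_of_ne h.1 h.2

theorem IsPermArray.eq_transpose (hA : IsPermArray A) (hB : IsPermArray B)
    (h : ∀ z, z ∈ B ↔ z.swap ∈ A) : B = transpose A :=
  eq_of_pairwise_map_fst_of_mem_iff hB.1 (isPermArray_transpose hA).1 fun z =>
    (h z).trans mem_transpose.symm

theorem transpose_transpose (hA : IsPermArray A) : transpose (transpose A) = A :=
  ((isPermArray_transpose hA).eq_transpose hA fun z => by rw [mem_transpose, Prod.swap_swap]).symm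

theorem precedes_swap_iff : Precedes p.swap q.swap ↔ Precedes p q :=
  and_comm

theorem HasChain.swap {A' : List (ℕ × ℕ)} (hAA' : ∀ z ∈ A, z.swap ∈ A') (h : HasChain A p k) :
    HasChain A' p.swap k := by
  obtain ⟨c, hcA, hc, hcp, rfl⟩ := h
  refine ⟨c.map Prod.swap, fun z hz => ?_, pairwise_map.mpr (hc.imp precedes_swap_iff.mpr),
    by simp [getLast?_map, hcp], length_map _⟩
  obtain ⟨x, hx, rfl⟩ := mem_map.mp hz
  exact hAA' x (hcA hx)

theorem height_transpose : height (transpose A) p = height A p.swap := by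
  have hto : ∀ z ∈ transpose A, z.swap ∈ A := fun z => mem_transpose.mp
  have hfrom : ∀ z ∈ A, z.swap ∈ transpose A := fun z hz => mem_transpose.mpr (by simpa using hz)
  exact le_antisymm (height_le_of_hasChain_imp fun _ => HasChain.swap hto)
    (height_le_of_hasChain_imp fun _ h => by simpa using h.swap hfrom)

theorem maxHeight_transpose : maxHeight (transpose A) = maxHeight A := by
  have : (transpose A).toFinset = A.toFinset.image Prod.swap := by
    ext z
    simp only [mem_toFinset, mem_transpose, Finset.mem_image]
    exact ⟨fun h => ⟨z.swap, h, z.swap_swap⟩, fun ⟨a, ha, hz⟩ => hz ▸ a.swap_swap.symm ▸ ha⟩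
  rw [maxHeight, this, Finset.sup_image, maxHeight]
  exact Finset.sup_congr rfl fun z _ => by simp [height_transpose]

theorem pileMins_transpose (f : ℕ × ℕ → ℕ) :
    pileMins f (transpose A) = pileMins (f ∘ Prod.swap) A := by
  rw [pileMins, pileMins, maxHeight_transpose]
  refine map_congr_left fun c hc => ?_
  obtain ⟨q, hq, hqh, hqf⟩ := exists_pileMin_eq (f := f ∘ Prod.swap) (mem_range.mp hc)
  refine pileMin_eq ⟨q.swap, mem_pile.mpr ⟨mem_transpose.mpr (by simpa), ?_⟩, hqf⟩ fun z hz => ?_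
  · simpa [height_transpose] using hqh
  · obtain ⟨hz, hzh⟩ := mem_pile.mp hz
    simpa using pileMin_le (f := f ∘ Prod.swap) (mem_transpose.mp hz) (height_transpose ▸ hzh)

theorem fst_lt_of_height_eq (hA : IsPermArray A) (hp : p ∈ A) (hq : q ∈ A)
    (hh : height A p = height A q) (h2 : p.2 < q.2) : q.1 < p.1 := by
  rcases lt_trichotomy q.1 p.1 with h | h | h
  · exact h
  · obtain rfl := inj_on_of_nodup_map (hA.1.imp ne_of_lt) hq hp h
    exact absurd h2 (lt_irrefl _)
  · exact absurd (snd_lt_of_height_eq hA.2 hp hq hh h) (not_lt.mpr h2.le)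

theorem bumps_transpose (hA : IsPermArray A) (h : Bumps A p q) :
    Bumps (transpose A) q.swap p.swap := by
  obtain ⟨hp, ⟨hq, hqh, hpq⟩, hmin⟩ := h
  refine ⟨mem_transpose.mpr (by simpa), ⟨mem_transpose.mpr (by simpa), by
    simp [height_transpose, hqh], fst_lt_of_height_eq hA hp hq hqh.symm hpq⟩, ?_⟩
  rintro r ⟨hr, hrh, hqr⟩
  by_contra! hrp
  rw [mem_transpose] at hr
  rw [height_transpose, height_transpose, Prod.swap_swap] at hrh
  have hrq : r.swap.2 < q.2 := snd_lt_of_height_eq hA.2 hq hr hrh.symm hqr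
  have hpr : p.2 < r.swap.2 := snd_lt_of_height_eq hA.2 hr hp (hrh.trans hqh) hrp
  exact absurd (hmin r.swap ⟨hr, hrh.trans hqh, hpr⟩) (not_le.mpr hrq)

theorem bumps_transpose_iff (hA : IsPermArray A) :
    Bumps (transpose A) q.swap p.swap ↔ Bumps A p q := by
  refine ⟨fun h => ?_, bumps_transpose hA⟩
  simpa [transpose_transpose hA] using bumps_transpose (isPermArray_transpose hA) h

theorem bumpedArray_transpose (hA : IsPermArray A) :
    bumpedArray (transpose A) = transpose (bumpedArray A) := by
  refine (isPermArray_bumpedArray hA).eq_transpose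
    (isPermArray_bumpedArray (isPermArray_transpose hA)) fun z => ?_
  rw [mem_bumpedArray (isPermArray_transpose hA).2, mem_bumpedArray hA.2]
  constructor
  · rintro ⟨x, y, hxy, rfl⟩
    exact ⟨y.swap, x.swap, (bumps_transpose_iff hA).mp (by simpa using hxy), rfl⟩
  · rintro ⟨p, q, hpq, hz⟩
    exact ⟨q.swap, p.swap, (bumps_transpose_iff hA).mpr hpq, by rw [← Prod.swap_swap z, hz]; rfl⟩

end Transpose

theorem rs_transpose {A : List (ℕ × ℕ)} (hA : IsPermArray A) :
    (rs (transpose A)).1 = (rs A).2 := by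
  induction hn : A.length using Nat.strong_induction_on generalizing A with
  | _ n ih =>
    rcases eq_or_ne A [] with rfl | hne
    · simp [transpose, rs]
    have hne' : transpose A ≠ [] :=
      ne_nil_of_length_pos (length_transpose A ▸ length_pos_of_ne_nil hne)
    rw [rs_eq_cons hne', rs_eq_cons hne, firstRow_eq (isPermArray_transpose hA), firstRow_eq hA,
      pileMins_transpose, bumpedArray_transpose hA,
      ih _ (hn ▸ length_bumpedArray_lt hne) (isPermArray_bumpedArray hA) rfl]
    rfl

section Words

def labelled (u : List ℕ) : List (ℕ × ℕ) :=
  u.mapIdx fun k x => (k + 1, x)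

theorem PQ_append_singleton (u : List ℕ) (x : ℕ) :
    PQ (u ++ [x]) = (insertT x (PQ u).1,
      Qstep (PQ u).1 (insertT x (PQ u).1) (PQ u).2 (u.length + 1)) := by
  simp only [PQ, length_append, length_singleton, range_succ, foldl_append, foldl_cons, foldl_nil]
  rw [foldl_ext _ _ _ fun pq k hk => by rw [getD_append _ _ _ _ (mem_range.mp hk)]]
  simp

theorem sameShape_rs (A : List (ℕ × ℕ)) : SameShape (rs A).1 (rs A).2 := by
  induction A using reverseRecOn with
  | nil => exact ⟨rfl, fun _ => rfl⟩
  | append_singleton A a ih =>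
    rw [rs_append_singleton]
    exact ih.insertT_appendToRow a.2 a.1

theorem PQ_eq_rs_labelled (u : List ℕ) : PQ u = rs (labelled u) := by
  induction u using reverseRecOn with
  | nil => rfl
  | append_singleton u x ih =>
    have hlab : labelled (u ++ [x]) = labelled u ++ [(u.length + 1, x)] := mapIdx_concat
    rw [PQ_append_singleton, ih, Qstep_insertT (sameShape_rs _), hlab, rs_append_singleton]
    rfl

theorem isPermArray_labelled {u : List ℕ} (hu : u.Nodup) : IsPermArray (labelled u) := by
  have hsnd : (labelled u).map Prod.snd = u := ext_getElem (by simp [labelled]) (by simp [labelled])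
  refine ⟨pairwise_iff_getElem.mpr fun i j _ _ hij => by simpa [labelled] using hij, by rwa [hsnd]⟩

theorem mem_labelled_word {N : ℕ} (w : Equiv.Perm (Fin N)) {z : ℕ × ℕ} :
    z ∈ labelled (word w) ↔ ∃ i : Fin N, ((i : ℕ) + 1, (w i : ℕ) + 1) = z := by
  simp only [labelled, mem_mapIdx, word, length_ofFn, List.getElem_ofFn]
  exact ⟨fun ⟨i, hi, h⟩ => ⟨⟨i, hi⟩, h⟩, fun ⟨i, h⟩ => ⟨i, i.2, h⟩⟩

theorem nodup_word {N : ℕ} (w : Equiv.Perm (Fin N)) : (word w).Nodup :=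
  nodup_ofFn.mpr fun i j h => w.injective (Fin.ext (by simpa using h))

theorem transpose_labelled_word {N : ℕ} (w : Equiv.Perm (Fin N)) :
    transpose (labelled (word w)) = labelled (word w⁻¹) := by
  refine ((isPermArray_labelled (nodup_word w)).eq_transpose
    (isPermArray_labelled (nodup_word w⁻¹)) fun z => ?_).symm
  rw [mem_labelled_word, mem_labelled_word]
  constructor
  · rintro ⟨i, rfl⟩
    exact ⟨w⁻¹ i, by simp⟩
  · rintro ⟨i, hi⟩
    exact ⟨w i, by rw [← Prod.swap_swap z, ← hi]; simp⟩

end Words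

end RobinsonSchensted

open RobinsonSchensted

/-- For any permutation `w ∈ S_N`, the recording tableau of the Robinson–Schensted
correspondence applied to `w` equals the insertion tableau applied to `w⁻¹`:
`Q(w) = P(w⁻¹)`. -/
theorem stmt6 {N : ℕ} (w : Equiv.Perm (Fin N)) :
    (PQ (word w)).2 = (PQ (word w⁻¹)).1 :=
  calc (PQ (word w)).2
    _ = (rs (labelled (word w))).2 := by rw [PQ_eq_rs_labelled]
    _ = (rs (transpose (labelled (word w)))).1 :=
      (rs_transpose (isPermArray_labelled (nodup_word w))).symm
    _ = (PQ (word w⁻¹)).1 := by rw [transpose_labelled_word, PQ_eq_rs_labelled]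
end

section
/- Let A and B be column-strict tableaux of the same partition shape λ with entries 1,…,N each used once, with A standard. If there exist a minimal j such that the sub-diagrams occupied by entries ≤ j differ in A and B, and j lies in column c of B and row r of A with column c of B strictly left of the column of A containing j and row r of A strictly below the row of B containing j, then A and B share a common entry i < j located in row r and column c of both, and hence i, j lie in the same row of A and the same column of B. -/
/-- The set of boxes of `T` occupied by the entries `≤ k`. -/
def subDiag {μ : YoungDiagram} {N : ℕ} (T : Tab μ N) (k : Fin N) : Finset (ℕ × ℕ) :=
  (Finset.univ.filter (fun l : Fin N => l ≤ k)).image T.pos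

/-- Let `A`, `B` be tableaux of the same shape with entries `1,…,N`, with `A` standard and
`B` column-strict.  Suppose `j` is minimal such that the sub-diagrams occupied by entries
`≤ j` differ in `A` and `B`, that the column of `B` containing `j` is strictly to the left
of the column of `A` containing `j`, and that the row of `A` containing `j` is strictly
below the row of `B` containing `j`.  Then `A` and `B` share a common entry `i < j`
located in row `(A.pos j).1` and column `(B.pos j).2` of both; hence `i` and `j` lie in
the same row of `A` and in the same column of `B`. -/
theorem stmt13 {μ : YoungDiagram} {N : ℕ} (A B : Tab μ N)
    (hA : Std A) (hB : ColStrict B) (j : Fin N)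
    (hmin : ∀ k : Fin N, k < j → subDiag A k = subDiag B k)
    (hne : subDiag A j ≠ subDiag B j)
    (hcol : (B.pos j).2 < (A.pos j).2)
    (hrow : (A.pos j).1 < (B.pos j).1) :
    ∃ i : Fin N, i < j ∧ A.pos i = ((A.pos j).1, (B.pos j).2) ∧
      B.pos i = ((A.pos j).1, (B.pos j).2) := by

  -- Entries below `j` occupy the same positions in `A` and `B`.
  have key : ∀ m : ℕ, ∀ k : Fin N, k.val = m → k < j → A.pos k = B.pos k := by
    intro m
    induction m using Nat.strong_induction_on with
    | _ m ih =>
      intro k hkm hk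
      have hmem : A.pos k ∈ subDiag B k := by
        rw [← hmin k hk]
        simp only [subDiag, Finset.mem_image, Finset.mem_filter, Finset.mem_univ, true_and]
        exact ⟨k, le_refl k, rfl⟩
      obtain ⟨l, hl, hlk⟩ : ∃ l : Fin N, l ≤ k ∧ B.pos l = A.pos k := by
        simpa [subDiag] using hmem
      rcases lt_or_eq_of_le hl with h | h
      · exfalso
        have h1 : A.pos l = B.pos l := ih l.val (by rw [← hkm]; exact h) l rfl (h.trans hk)
        have h2 : A.pos l = A.pos k := h1.trans hlk
        exact absurd (A.inj h2) (ne_of_lt h)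
      · subst h; exact hlk.symm
  have hbox : ((A.pos j).1, (B.pos j).2) ∈ μ :=
    μ.up_left_mem (le_refl _) (le_of_lt hcol) (by rw [Prod.mk.eta]; exact A.mem j)
  obtain ⟨a, ha⟩ := A.surj _ hbox
  have hr : (A.pos a).1 = (A.pos j).1 := by rw [ha]
  have hc : (A.pos a).2 = (B.pos j).2 := by rw [ha]
  have haj : a < j := by
    rcases lt_trichotomy a j with h | h | h
    · exact h
    · exfalso; rw [h] at hc; omega
    · exfalso
      have := hA.2 j a h hr.symm
      omega
  exact ⟨a, haj, ha, (key a.val a rfl haj).symm.trans ha⟩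
end
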